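/- arXiv:1907.08309 — 4 statements merged into one kernel-verified Lean document; each statement's English description precedes it below -/
import Mathlib

section
/- There is no polynomial P ∈ ℂ[x,y] such that ∂ₓ²P + (∂ₓP)² + ∂ᵧ²P + (∂ᵧP)² = x identically, because the left-hand side always has even total degree while the right-hand side has odd total degree 1. -/
open Polynomial

noncomputable def Dv : Derivation ℂ (Polynomial (Polynomial ℂ)) (Polynomial (Polynomial ℂ)) :=
  PolynomialModule.equivPolynomialSelf.compDer (Polynomial.derivative' (R := ℂ)).mapCoeffs

lemma coeff_Dv (p : Polynomial (Polynomial ℂ)) (i : ℕ) :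
    (Dv p).coeff i = derivative (p.coeff i) := rfl

lemma Dv_C (q : Polynomial ℂ) : Dv (C q) = C (derivative q) := by
  ext i
  rw [coeff_Dv]
  rcases eq_or_ne i 0 with rfl | hi
  · simp
  · simp [coeff_C, hi]

lemma Dv_X : Dv (X : Polynomial (Polynomial ℂ)) = 0 := by
  ext i
  rw [coeff_Dv]
  rcases eq_or_ne i 1 with rfl | hi
  · simp
  · simp [coeff_X, hi, Ne.symm hi]

noncomputable def Phi : MvPolynomial (Fin 2) ℂ →ₐ[ℂ] Polynomial (Polynomial ℂ) :=
  MvPolynomial.aeval ![X + C X, C (C Complex.I) * (X - C X)]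

lemma Phi_X0 : Phi (MvPolynomial.X 0) = X + C X := by simp [Phi]

lemma Phi_X1 : Phi (MvPolynomial.X 1) = C (C Complex.I) * (X - C X) := by simp [Phi]

lemma pderiv_comm (i j : Fin 2) (p : MvPolynomial (Fin 2) ℂ) :
    MvPolynomial.pderiv i (MvPolynomial.pderiv j p)
      = MvPolynomial.pderiv j (MvPolynomial.pderiv i p) := by
  induction p using MvPolynomial.induction_on with
  | C a => simp
  | add p q hp hq => simp [hp, hq]
  | mul_X p k hp =>
    have h1 : ∀ a b : Fin 2,
        MvPolynomial.pderiv a (MvPolynomial.pderiv b (MvPolynomial.X k : MvPolynomial (Fin 2) ℂ))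
          = 0 := by
      intro a b
      rcases eq_or_ne b k with rfl | hbk
      · rw [MvPolynomial.pderiv_X_self]; simp
      · rw [MvPolynomial.pderiv_X_of_ne (Ne.symm hbk)]; simp
    simp only [MvPolynomial.pderiv_mul, map_add, hp, h1, mul_zero, add_zero]
    ring

lemma chain_u (Q : MvPolynomial (Fin 2) ℂ) :
    derivative (Phi Q)
      = Phi (MvPolynomial.pderiv 0 Q) + C (C Complex.I) * Phi (MvPolynomial.pderiv 1 Q) := by
  induction Q using MvPolynomial.induction_on with
  | C a => simp [Phi, MvPolynomial.algebraMap_eq]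
  | add p q hp hq => simp only [map_add, hp, hq]; ring
  | mul_X p i hp =>
    rw [map_mul, derivative_mul, hp,
      MvPolynomial.pderiv_mul, MvPolynomial.pderiv_mul, map_add, map_add,
      map_mul, map_mul, map_mul, map_mul]
    fin_cases i <;> simp only [Fin.zero_eta, Fin.mk_one]
    · rw [MvPolynomial.pderiv_X_self, MvPolynomial.pderiv_X_of_ne (by decide), map_one,
        map_zero, Phi_X0]
      simp only [derivative_add, derivative_X, derivative_C]
      ring
    · rw [MvPolynomial.pderiv_X_self, MvPolynomial.pderiv_X_of_ne (by decide), map_one,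
        map_zero, Phi_X1]
      simp only [derivative_mul, derivative_sub, derivative_X, derivative_C]
      ring

lemma chain_v (Q : MvPolynomial (Fin 2) ℂ) :
    Dv (Phi Q)
      = Phi (MvPolynomial.pderiv 0 Q) - C (C Complex.I) * Phi (MvPolynomial.pderiv 1 Q) := by
  induction Q using MvPolynomial.induction_on with
  | C a => simp [Phi, MvPolynomial.algebraMap_eq, Dv_C]
  | add p q hp hq => simp only [map_add, hp, hq]; ring
  | mul_X p i hp =>
    rw [map_mul, Derivation.leibniz, smul_eq_mul, smul_eq_mul, hp,
      MvPolynomial.pderiv_mul, MvPolynomial.pderiv_mul, map_add, map_add,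
      map_mul, map_mul, map_mul, map_mul]
    fin_cases i <;> simp only [Fin.zero_eta, Fin.mk_one]
    · rw [MvPolynomial.pderiv_X_self, MvPolynomial.pderiv_X_of_ne (by decide), map_one,
        map_zero, Phi_X0]
      rw [map_add, Dv_X, Dv_C, derivative_X, map_one]
      ring
    · rw [MvPolynomial.pderiv_X_self, MvPolynomial.pderiv_X_of_ne (by decide), map_one,
        map_zero, Phi_X1]
      rw [Derivation.leibniz, smul_eq_mul, smul_eq_mul, map_sub, Dv_X, Dv_C, Dv_C,
        derivative_X, derivative_C, map_one, map_zero]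
      ring
lemma mul_deriv_ne_one (a : Polynomial ℂ) : a * derivative a ≠ 1 := by
  intro h
  rcases eq_or_ne (derivative a) 0 with h0 | h0
  · rw [h0, mul_zero] at h; exact zero_ne_one h
  have ha : a ≠ 0 := by rintro rfl; simp at h0
  have h1 : a.natDegree ≠ 0 := by
    intro hd
    exact h0 (by rw [eq_C_of_natDegree_eq_zero hd]; simp)
  have h2 := natDegree_mul ha h0
  rw [h, natDegree_one] at h2
  omega

lemma coeff_XCX_one : (X + C X : Polynomial (Polynomial ℂ)).coeff 1 = 1 := by
  simp [coeff_C]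

lemma coeff_XCX_zero : (X + C X : Polynomial (Polynomial ℂ)).coeff 0 = X := by
  simp

lemma key (G H : Polynomial (Polynomial ℂ))
    (hH : ∀ k, H.coeff k = derivative (G.coeff k))
    (heq : derivative H + derivative G * H = X + C X) : False := by
  -- G has nonzero u-derivative
  have hG' : derivative G ≠ 0 := by
    intro h
    rw [h, zero_mul, add_zero] at heq
    have h1 := congrArg (fun p => coeff p 1) heq
    simp only [coeff_derivative, coeff_XCX_one] at h1
    have hG2 : G.coeff 2 = 0 := by
      have : G.natDegree = 0 := natDegree_eq_zero_of_derivative_eq_zero h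
      exact coeff_eq_zero_of_natDegree_lt (by omega)
    rw [hH 2, hG2] at h1
    simp at h1
  have hH0 : H ≠ 0 := by
    rintro rfl
    rw [mul_zero, map_zero, add_zero] at heq
    have h1 := congrArg (fun p => coeff p 1) heq
    simp [coeff_XCX_one] at h1
  -- natDegree H ≤ 1
  have hr : H.natDegree ≤ 1 := by
    by_contra hr
    push_neg at hr
    have hd : derivative G * H = X + C X - derivative H := by
      rw [← heq]; ring
    have h1 : (X + C X - derivative H : Polynomial (Polynomial ℂ)).natDegree
        ≤ max 1 (H.natDegree - 1) := by
      refine (natDegree_sub_le _ _).trans (max_le_max ?_ (natDegree_derivative_le H))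
      exact le_of_eq (natDegree_X_add_C _)
    have h2 : (derivative G * H).natDegree = (derivative G).natDegree + H.natDegree :=
      natDegree_mul hG' hH0
    rw [hd] at h2
    omega
  -- case split on natDegree H
  rcases Nat.le_one_iff_eq_zero_or_eq_one.mp hr with h0 | h1
  · -- H = C h, derivative H = 0
    have hHC : H = C (H.coeff 0) := eq_C_of_natDegree_eq_zero h0
    have hdH : derivative H = 0 := by rw [hHC]; simp
    rw [hdH, zero_add] at heq
    have e1 := congrArg (fun p => coeff p 1) heq
    have e0 := congrArg (fun p => coeff p 0) heq
    simp only [coeff_XCX_one, coeff_XCX_zero] at e1 e0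
    rw [hHC, coeff_mul_C] at e1 e0
    -- h is a unit
    have hu : IsUnit (H.coeff 0) := IsUnit.of_mul_eq_one _ (by rw [mul_comm] at e1; exact e1)
    obtain ⟨c, hc, hch⟩ := Polynomial.isUnit_iff.mp hu
    have hdh : derivative (H.coeff 0) = 0 := by rw [← hch]; simp
    -- derivative of G.coeff 1 vanishes
    have hdG1 : derivative (G.coeff 1) = 0 := by
      rw [← hH 1]
      exact coeff_eq_zero_of_natDegree_lt (by omega)
    -- coeff 0 equation: G.coeff 1 * h = X
    have e0' : G.coeff 1 * H.coeff 0 = X := by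
      rw [coeff_derivative] at e0
      push_cast at e0
      rw [← e0]; ring
    have := congrArg derivative e0'
    rw [derivative_mul, hdG1, hdh, mul_zero, zero_mul, zero_add, derivative_X] at this
    simp at this
  · -- natDegree H = 1
    have hdG0 : (derivative G).natDegree = 0 := by
      have hd : derivative G * H = X + C X - derivative H := by
        rw [← heq]; ring
      have hdH : (derivative H).natDegree = 0 := by
        have := natDegree_derivative_le H
        omega
      have h1 : (X + C X - derivative H : Polynomial (Polynomial ℂ)).natDegree ≤ 1 := by
        refine (natDegree_sub_le _ _).trans ?_
        rw [natDegree_X_add_C, hdH]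
        simp
      have h2 : (derivative G * H).natDegree = (derivative G).natDegree + H.natDegree :=
        natDegree_mul hG' hH0
      rw [hd] at h2
      omega
    have hGC : derivative G = C ((derivative G).coeff 0) := eq_C_of_natDegree_eq_zero hdG0
    have e1 := congrArg (fun p => coeff p 1) heq
    simp only [coeff_XCX_one] at e1
    simp only [coeff_add] at e1
    have hH2 : H.coeff 2 = 0 := coeff_eq_zero_of_natDegree_lt (by omega)
    rw [coeff_derivative, hH2, zero_mul] at e1
    rw [hGC, coeff_C_mul] at e1
    rw [zero_add] at e1
    have hg : (derivative G).coeff 0 = G.coeff 1 := by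
      rw [coeff_derivative]; push_cast; ring
    rw [hg, hH 1] at e1
    exact mul_deriv_ne_one _ e1

open MvPolynomial

/-- There is no polynomial `P ∈ ℂ[x,y]` such that
`∂ₓ²P + (∂ₓP)² + ∂ᵧ²P + (∂ᵧP)² = x` identically. -/
theorem stmt0 :
    ¬ ∃ P : MvPolynomial (Fin 2) ℂ,
      pderiv 0 (pderiv 0 P) + (pderiv 0 P) ^ 2 + pderiv 1 (pderiv 1 P) + (pderiv 1 P) ^ 2
        = X 0 := by
  rintro ⟨P, hP⟩
  have hcI : (Polynomial.C (Polynomial.C Complex.I) : Polynomial (Polynomial ℂ))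
      * Polynomial.C (Polynomial.C Complex.I) = -1 := by
    rw [← Polynomial.C_mul, ← Polynomial.C_mul, Complex.I_mul_I]
    simp
  have hu := chain_u P
  have hv := chain_v P
  have hu0 := chain_u (MvPolynomial.pderiv 0 P)
  have hu1 := chain_u (MvPolynomial.pderiv 1 P)
  rw [pderiv_comm 1 0 P] at hu0
  have hPhi := congrArg Phi hP
  rw [map_add, map_add, map_add, map_pow, map_pow, Phi_X0] at hPhi
  apply key (Phi P) (Dv (Phi P)) (fun k => coeff_Dv _ _)
  rw [hv, derivative_sub, derivative_C_mul, hu0, hu1, hu]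
  linear_combination hPhi
    - (Phi (MvPolynomial.pderiv 1 (MvPolynomial.pderiv 1 P))
        + Phi (MvPolynomial.pderiv 1 P) ^ 2) * hcI
end

section
/- Let P ∈ ℂ[x,y]. Then for any (i,j,I,J,k) ∈ ℕ⁵, the derivative ∂ₓᴵ∂ᵧᴶ[(∂ₓⁱ∂ᵧʲ P)^k] can be expressed as a linear combination of products ∏_{m} (∂ₓ^{a_m}∂ᵧ^{b_m} P)^{c_m} whose indices satisfy ∑_m c_m(a_m + b_m) ≤ I + J + k(i+j). -/
open MvPolynomial

namespace Stmt11Aux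

variable (P : MvPolynomial (Fin 2) ℂ)

theorem pderiv_comm {σ R : Type*} [CommSemiring R] (i j : σ) (p : MvPolynomial σ R) :
    pderiv i (pderiv j p) = pderiv j (pderiv i p) := by
  classical
  induction p using MvPolynomial.induction_on' with
  | monomial s a =>
    rcases eq_or_ne i j with rfl | hij
    · rfl
    · simp only [pderiv_monomial, Finsupp.tsub_apply,
        Finsupp.single_eq_of_ne' hij, Finsupp.single_eq_of_ne' (Ne.symm hij), tsub_zero]
      rw [tsub_right_comm, mul_right_comm]
  | add p q hp hq => simp [hp, hq]

noncomputable def T (ab : ℕ × ℕ) : MvPolynomial (Fin 2) ℂ :=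
  (fun q => pderiv (0 : Fin 2) q)^[ab.1] ((fun q => pderiv (1 : Fin 2) q)^[ab.2] P)

lemma pderiv0_T (ab : ℕ × ℕ) : pderiv (0 : Fin 2) (T P ab) = T P (ab.1 + 1, ab.2) := by
  simp [T, Function.iterate_succ_apply']

lemma pderiv1_iter (n : ℕ) (p : MvPolynomial (Fin 2) ℂ) :
    pderiv (1 : Fin 2) ((fun q => pderiv (0 : Fin 2) q)^[n] p)
      = (fun q => pderiv (0 : Fin 2) q)^[n] (pderiv (1 : Fin 2) p) := by
  induction n generalizing p with
  | zero => rfl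
  | succ n ih =>
    rw [Function.iterate_succ_apply, Function.iterate_succ_apply, ih, pderiv_comm]

lemma pderiv1_T (ab : ℕ × ℕ) : pderiv (1 : Fin 2) (T P ab) = T P (ab.1, ab.2 + 1) := by
  simp only [T, pderiv1_iter]
  rw [← Function.iterate_succ_apply' (fun q => pderiv (1 : Fin 2) q)]

noncomputable def Dp (μ : (ℕ × ℕ) →₀ ℕ) : MvPolynomial (Fin 2) ℂ :=
  ∏ ab ∈ μ.support, T P ab ^ μ ab

lemma Dp_eq_prod (μ : (ℕ × ℕ) →₀ ℕ) : Dp P μ = μ.prod (fun ab c => T P ab ^ c) := rfl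

lemma Dp_add (μ ν : (ℕ × ℕ) →₀ ℕ) : Dp P (μ + ν) = Dp P μ * Dp P ν := by
  simp only [Dp_eq_prod]
  exact Finsupp.prod_add_index' (fun a => pow_zero _) (fun a b c => pow_add _ _ _)

lemma Dp_single (ab : ℕ × ℕ) (c : ℕ) : Dp P (Finsupp.single ab c) = T P ab ^ c := by
  simp [Dp_eq_prod, Finsupp.prod_single_index]

def wt (μ : (ℕ × ℕ) →₀ ℕ) : ℕ := ∑ ab ∈ μ.support, μ ab * (ab.1 + ab.2)

lemma wt_eq_sum (μ : (ℕ × ℕ) →₀ ℕ) : wt μ = μ.sum (fun ab c => c * (ab.1 + ab.2)) := rfl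

lemma wt_add (μ ν : (ℕ × ℕ) →₀ ℕ) : wt (μ + ν) = wt μ + wt ν := by
  simp only [wt_eq_sum]
  exact Finsupp.sum_add_index' (fun a => zero_mul _) (fun a b c => add_mul _ _ _)

lemma wt_single (ab : ℕ × ℕ) (c : ℕ) : wt (Finsupp.single ab c) = c * (ab.1 + ab.2) := by
  simp [wt_eq_sum, Finsupp.sum_single_index]

def Good (B : ℕ) (Q : MvPolynomial (Fin 2) ℂ) : Prop :=
  ∃ (S : Finset ((ℕ × ℕ) →₀ ℕ)) (coef : ((ℕ × ℕ) →₀ ℕ) → ℂ),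
    Q = ∑ μ ∈ S, coef μ • Dp P μ ∧ ∀ μ ∈ S, wt μ ≤ B

variable {P}

lemma Good.mono {B B' : ℕ} {Q} (h : Good P B Q) (hB : B ≤ B') : Good P B' Q := by
  obtain ⟨S, coef, hQ, hw⟩ := h
  exact ⟨S, coef, hQ, fun μ hμ => (hw μ hμ).trans hB⟩

lemma good_zero (B : ℕ) : Good P B 0 :=
  ⟨∅, fun _ => 0, by simp, by simp⟩

lemma good_Dp {B : ℕ} {μ : (ℕ × ℕ) →₀ ℕ} (h : wt μ ≤ B) : Good P B (Dp P μ) :=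
  ⟨{μ}, fun _ => 1, by simp, by simpa⟩

lemma Good.smul {B : ℕ} {Q} (h : Good P B Q) (c : ℂ) : Good P B (c • Q) := by
  obtain ⟨S, coef, hQ, hw⟩ := h
  refine ⟨S, fun μ => c * coef μ, ?_, hw⟩
  rw [hQ, Finset.smul_sum]
  simp [smul_smul]

lemma Good.add {B : ℕ} {Q₁ Q₂} (h₁ : Good P B Q₁) (h₂ : Good P B Q₂) :
    Good P B (Q₁ + Q₂) := by
  classical
  obtain ⟨S₁, c₁, hQ₁, hw₁⟩ := h₁
  obtain ⟨S₂, c₂, hQ₂, hw₂⟩ := h₂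
  refine ⟨S₁ ∪ S₂, fun μ => (if μ ∈ S₁ then c₁ μ else 0) + (if μ ∈ S₂ then c₂ μ else 0),
    ?_, ?_⟩
  · rw [hQ₁, hQ₂]
    simp only [add_smul]
    rw [Finset.sum_add_distrib]
    simp only [ite_smul, zero_smul]
    congr 1
    · rw [← Finset.sum_filter]
      rw [Finset.filter_mem_eq_inter, Finset.union_inter_cancel_left]
    · rw [← Finset.sum_filter]
      rw [Finset.filter_mem_eq_inter, Finset.union_inter_cancel_right]
  · intro μ hμ
    rcases Finset.mem_union.mp hμ with h | h
    · exact hw₁ μ h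
    · exact hw₂ μ h

lemma good_sum {B : ℕ} {ι : Type*} (s : Finset ι) (f : ι → MvPolynomial (Fin 2) ℂ)
    (h : ∀ x ∈ s, Good P B (f x)) : Good P B (∑ x ∈ s, f x) := by
  classical
  induction s using Finset.induction with
  | empty => simpa using good_zero B
  | insert x s hx ih =>
    rw [Finset.sum_insert hx]
    exact (h _ (Finset.mem_insert_self _ _)).add
      (ih fun x hxs => h x (Finset.mem_insert_of_mem hxs))

lemma Good.mul_Dp {B : ℕ} {Q} (h : Good P B Q) (μ₀ : (ℕ × ℕ) →₀ ℕ) :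
    Good P (wt μ₀ + B) (Dp P μ₀ * Q) := by
  classical
  obtain ⟨S, coef, hQ, hw⟩ := h
  refine ⟨S.image (μ₀ + ·), fun μ => coef (μ - μ₀), ?_, ?_⟩
  · rw [hQ, Finset.mul_sum, Finset.sum_image (fun a _ b _ h => by
      simpa using add_right_injective μ₀ h)]
    refine Finset.sum_congr rfl fun μ hμ => ?_
    simp only [add_tsub_cancel_left, mul_smul_comm, ← Dp_add]
  · intro μ hμ
    obtain ⟨ν, hν, rfl⟩ := Finset.mem_image.mp hμ
    rw [wt_add]
    exact Nat.add_le_add_left (hw ν hν) _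

/-- the key Leibniz step. -/
lemma good_pderiv_Dp (v : Fin 2) (μ : (ℕ × ℕ) →₀ ℕ) :
    Good P (wt μ + 1) (pderiv v (Dp P μ)) := by
  classical
  -- a shift function on indices
  obtain ⟨sab, hT, hwt⟩ :
      ∃ sab : ℕ × ℕ → ℕ × ℕ, (∀ ab, pderiv v (T P ab) = T P (sab ab)) ∧
        (∀ ab, (sab ab).1 + (sab ab).2 = ab.1 + ab.2 + 1) := by
    fin_cases v
    · exact ⟨fun ab => (ab.1 + 1, ab.2), fun ab => pderiv0_T P ab, fun ab => by dsimp only; omega⟩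
    · exact ⟨fun ab => (ab.1, ab.2 + 1), fun ab => pderiv1_T P ab, fun ab => by dsimp only; omega⟩
  induction μ using Finsupp.induction with
  | zero =>
    have : Dp P (0 : (ℕ × ℕ) →₀ ℕ) = 1 := by simp [Dp_eq_prod]
    rw [this]
    simpa using good_zero _
  | single_add a b f ha hb ih =>
    rw [Dp_add, Dp_single, pderiv_mul, pderiv_pow]
    refine Good.add ?_ ?_
    · -- (b * T a ^ (b-1) * pderiv v (T a)) * Dp f
      rw [hT a]
      have heq : (↑b * T P a ^ (b - 1) * T P (sab a)) * Dp P f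
          = (b : ℂ) • Dp P (Finsupp.single a (b - 1) + Finsupp.single (sab a) 1 + f) := by
        rw [Dp_add, Dp_add, Dp_single, Dp_single, pow_one]
        rw [MvPolynomial.smul_eq_C_mul, MvPolynomial.C_eq_coe_nat]
        ring
      rw [heq]
      refine Good.smul (good_Dp ?_) _
      rw [wt_add, wt_add, wt_single, wt_single, wt_add, wt_single, hwt a]
      have hb1 : 1 ≤ b := Nat.one_le_iff_ne_zero.mpr hb
      nlinarith [Nat.sub_add_cancel hb1]
    · -- T a ^ b * pderiv v (Dp f)
      have := (ih).mul_Dp (Finsupp.single a b)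
      rw [Dp_single] at this
      refine this.mono ?_
      rw [wt_add, wt_single]
      omega

lemma good_pderiv {B : ℕ} {Q : MvPolynomial (Fin 2) ℂ} (h : Good P B Q) (v : Fin 2) :
    Good P (B + 1) (pderiv v Q) := by
  obtain ⟨S, coef, hQ, hw⟩ := h
  rw [hQ, map_sum]
  refine good_sum S _ fun μ hμ => ?_
  rw [Derivation.map_smul]
  exact Good.smul ((good_pderiv_Dp v μ).mono
    (by have := hw μ hμ; omega : wt μ + 1 ≤ B + 1)) _

lemma good_iter {B : ℕ} {Q : MvPolynomial (Fin 2) ℂ} (h : Good P B Q) (v : Fin 2) (n : ℕ) :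
    Good P (B + n) ((fun q => pderiv v q)^[n] Q) := by
  induction n with
  | zero => simpa using h
  | succ n ih =>
    rw [Function.iterate_succ_apply']
    exact (good_pderiv ih v).mono (by omega : B + n + 1 ≤ B + (n + 1))

end Stmt11Aux

open Stmt11Aux in
/-- For `P ∈ ℂ[x,y]`, the derivative `∂ₓᴵ∂ᵧᴶ[(∂ₓⁱ∂ᵧʲ P)^k]` is a linear combination of
products `∏ₘ (∂ₓ^{aₘ}∂ᵧ^{bₘ}P)^{cₘ}` (encoded by multiplicity functions `μ : (ℕ×ℕ) →₀ ℕ`)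
whose indices satisfy `∑ₘ cₘ(aₘ+bₘ) ≤ I + J + k(i+j)`. -/
theorem stmt11 (P : MvPolynomial (Fin 2) ℂ) (i j I J k : ℕ) :
    ∃ (S : Finset ((ℕ × ℕ) →₀ ℕ)) (coef : ((ℕ × ℕ) →₀ ℕ) → ℂ),
      ((fun q => pderiv (0 : Fin 2) q)^[I] ((fun q => pderiv (1 : Fin 2) q)^[J]
          (((fun q => pderiv (0 : Fin 2) q)^[i] ((fun q => pderiv (1 : Fin 2) q)^[j] P)) ^ k))
        = ∑ μ ∈ S, coef μ • ∏ ab ∈ μ.support,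
            ((fun q => pderiv (0 : Fin 2) q)^[ab.1]
              ((fun q => pderiv (1 : Fin 2) q)^[ab.2] P)) ^ (μ ab))
      ∧ ∀ μ ∈ S, ∑ ab ∈ μ.support, μ ab * (ab.1 + ab.2) ≤ I + J + k * (i + j) := by
  have h0 : Good P (k * (i + j)) (T P (i, j) ^ k) := by
    have h := good_Dp (P := P) (B := k * (i + j)) (μ := Finsupp.single (i, j) k)
      (le_of_eq (wt_single (i, j) k))
    rwa [Dp_single] at h
  have h2 := good_iter (good_iter h0 1 J) 0 I
  obtain ⟨S, coef, hQ, hw⟩ := h2.mono (by omega : k * (i + j) + J + I ≤ I + J + k * (i + j))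
  exact ⟨S, coef, hQ, hw⟩
end

section
/- Let n ∈ ℕ and let F_n be the family of (n+1)(n+2)/2 functions θ ↦ cos^{k}θ sin^{K-k}θ/(k!(K-k)!) for 0 ≤ k ≤ K ≤ n. For any N_p points θ₁,…,θ_{N_p} ∈ ℝ, the matrix A ∈ ℂ^{((n+1)(n+2)/2) × N_p} with entries A_{il} = f_i(θ_l) has rank at most 2n+1. -/
/-!
Since `cos t = (e^{it} + e^{-it})/2` and `sin t = (e^{it} - e^{-it})/(2i)`, every product
`cosᵏ t sinʲ t` with `k + j ≤ n` is a trigonometric polynomial of degree at most `n`, i.e. lies in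
the span of the `2n+1` functions `t ↦ e^{imt}`, `|m| ≤ n`. Each row of the matrix is such a
function restricted to the points `θ_l`, so the row space has dimension at most `2n+1`.
-/

open Complex Module

noncomputable def expMode (m : ℤ) : ℝ → ℂ := fun t => exp (m * t * I)

lemma expMode_add (m m' : ℤ) : expMode (m + m') = expMode m * expMode m' := by
  ext t; simp only [expMode, Pi.mul_apply, ← exp_add]; push_cast; ring_nf

noncomputable def trigPoly (n : ℕ) : Submodule ℂ (ℝ → ℂ) :=
  Submodule.span ℂ (expMode '' Set.Icc (-(n : ℤ)) n)

namespace trigPoly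

lemma expMode_mem {n : ℕ} {m : ℤ} (hm : m ∈ Set.Icc (-(n : ℤ)) n) : expMode m ∈ trigPoly n :=
  Submodule.subset_span (Set.mem_image_of_mem _ hm)

lemma mono : Monotone trigPoly := fun _ _ h =>
  Submodule.span_mono <| Set.image_mono <| Set.Icc_subset_Icc (by omega) (by omega)

lemma mul_le (a b : ℕ) : trigPoly a * trigPoly b ≤ trigPoly (a + b) := by
  rw [trigPoly, trigPoly, Submodule.span_mul_span]
  refine Submodule.span_le.mpr ?_
  rintro _ ⟨_, ⟨m, hm, rfl⟩, _, ⟨m', hm', rfl⟩, rfl⟩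
  change expMode m * expMode m' ∈ _
  rw [← expMode_add]
  exact expMode_mem ⟨by push_cast; linarith [hm.1, hm'.1], by push_cast; linarith [hm.2, hm'.2]⟩

lemma mul_mem {a b : ℕ} {f g : ℝ → ℂ} (hf : f ∈ trigPoly a) (hg : g ∈ trigPoly b) :
    f * g ∈ trigPoly (a + b) :=
  mul_le a b (Submodule.mul_mem_mul hf hg)

lemma pow_mem {a : ℕ} {f : ℝ → ℂ} (hf : f ∈ trigPoly a) (k : ℕ) : f ^ k ∈ trigPoly (a * k) := by
  induction k with
  | zero =>
    have : expMode 0 = 1 := by ext; simp [expMode]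
    simpa [this] using expMode_mem (n := 0) (m := 0) (by simp)
  | succ k ih => rw [pow_succ, mul_add_one]; exact mul_mem ih hf

lemma cos_mem : (fun t : ℝ => (Real.cos t : ℂ)) ∈ trigPoly 1 := by
  have : (fun t : ℝ => (Real.cos t : ℂ)) = (2 : ℂ)⁻¹ • (expMode 1 + expMode (-1)) := by
    ext t; simp only [Pi.smul_apply, Pi.add_apply, smul_eq_mul, expMode, ofReal_cos, cos]; push_cast; ring_nf
  rw [this]
  exact Submodule.smul_mem _ _ (add_mem (expMode_mem (by simp)) (expMode_mem (by simp)))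

lemma sin_mem : (fun t : ℝ => (Real.sin t : ℂ)) ∈ trigPoly 1 := by
  have : (fun t : ℝ => (Real.sin t : ℂ)) = (2 * I)⁻¹ • (expMode 1 - expMode (-1)) := by
    ext t; simp only [Pi.smul_apply, Pi.sub_apply, smul_eq_mul, expMode, ofReal_sin, sin, mul_inv, inv_I]; push_cast; ring_nf
  rw [this]
  exact Submodule.smul_mem _ _ (sub_mem (expMode_mem (by simp)) (expMode_mem (by simp)))

instance (n : ℕ) : Module.Finite ℂ (trigPoly n) :=
  FiniteDimensional.span_of_finite ℂ ((Set.finite_Icc _ _).image _)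

lemma finrank_le (n : ℕ) : finrank ℂ (trigPoly n) ≤ 2 * n + 1 := by
  rw [trigPoly, Set.image_eq_range]
  refine (finrank_range_le_card _).trans_eq ?_
  rw [Fintype.card_ofFinset, Int.card_Icc]
  omega

end trigPoly

lemma Matrix.rank_le_finrank_of_row_mem {m n R : Type*} [Fintype m] [Fintype n] [Field R]
    {A : Matrix m n R} {W : Submodule R (n → R)} [Module.Finite R W] (h : ∀ i, A i ∈ W) :
    A.rank ≤ finrank R W := by
  rw [Matrix.rank_eq_finrank_span_row]
  exact Submodule.finrank_mono (Submodule.span_le.mpr (Set.range_subset_iff.mpr h))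

lemma cos_pow_mul_sin_pow_mem_trigPoly (k j : ℕ) :
    (fun t : ℝ => (Real.cos t : ℂ) ^ k * (Real.sin t : ℂ) ^ j) ∈ trigPoly (k + j) := by
  have h := trigPoly.mul_mem (trigPoly.pow_mem trigPoly.cos_mem k) (trigPoly.pow_mem trigPoly.sin_mem j)
  rwa [one_mul, one_mul] at h

/-- The matrix of values `f(θ_l)` of the `(n+1)(n+2)/2` normalized trigonometric
monomials `θ ↦ cosᵏθ sin^{K-k}θ/(k!(K-k)!)`, `0 ≤ k ≤ K ≤ n` (rows indexed by pairs
`(K,k)`), at arbitrary points `θ₁,…,θ_{N_p} ∈ ℝ`, has rank at most `2n+1`. -/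
theorem stmt14 (n Np : ℕ) (θ : Fin Np → ℝ)
    (A : Matrix ((K : Fin (n + 1)) × Fin (K.val + 1)) (Fin Np) ℂ)
    (hA : ∀ (r : (K : Fin (n + 1)) × Fin (K.val + 1)) (l : Fin Np),
      A r l = (Real.cos (θ l) : ℂ) ^ (r.2 : ℕ) * (Real.sin (θ l) : ℂ) ^ ((r.1 : ℕ) - (r.2 : ℕ)) /
        ((Nat.factorial (r.2 : ℕ) : ℂ) * (Nat.factorial ((r.1 : ℕ) - (r.2 : ℕ)) : ℂ))) :
    A.rank ≤ 2 * n + 1 := by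
  have hrow : ∀ r, A r ∈ (trigPoly n).map (LinearMap.funLeft ℂ ℂ θ) := by
    rintro ⟨K, k⟩
    have hdeg : (k : ℕ) + (K - k) ≤ n := by omega
    refine ⟨_, Submodule.smul_mem _ ((k : ℕ).factorial * ((K : ℕ) - k).factorial : ℂ)⁻¹
      (trigPoly.mono hdeg (cos_pow_mul_sin_pow_mem_trigPoly k (K - k))), ?_⟩
    ext l
    simp [hA, div_eq_inv_mul]
  calc A.rank ≤ finrank ℂ ((trigPoly n).map (LinearMap.funLeft ℂ ℂ θ)) :=
        Matrix.rank_le_finrank_of_row_mem hrow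
    _ ≤ finrank ℂ (trigPoly n) := Submodule.finrank_map_le _ _
    _ ≤ 2 * n + 1 := trigPoly.finrank_le n
end

section
/- Let n ∈ ℕ*, p ∈ ℕ*, κ ∈ ℝ \ {0}, and distinct angles θ₁,…,θ_p ∈ [0,2π). Define M^C ∈ ℂ^{((n+1)(n+2)/2) × p} by (M^C)_{(k₁+k₂)(k₁+k₂+1)/2 + k₂ + 1, l} = (iκ)^{k₁+k₂} cos^{k₁}θ_l sin^{k₂}θ_l/(k₁!k₂!) for k₁+k₂ ≤ n. Then rank M^C = 2n+1 if and only if p ≥ 2n+1. -/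
private noncomputable def auxP (n : ℕ) (κ : ℝ) (K b : ℕ) : Polynomial ℂ :=
  Polynomial.C ((Complex.I * κ) ^ K /
    ((Nat.factorial (K - b) : ℂ) * (Nat.factorial b : ℂ) * 2 ^ K * Complex.I ^ b)) *
  (Polynomial.X ^ 2 + 1) ^ (K - b) * (Polynomial.X ^ 2 - 1) ^ b * Polynomial.X ^ (n - K)

private lemma auxP_natDegree_lt (n : ℕ) (κ : ℝ) (K b : ℕ) (hb : b ≤ K) (hK : K ≤ n) :
    (auxP n κ K b).natDegree < 2 * n + 1 := by
  have : (auxP n κ K b).natDegree ≤ 2 * n := by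
    unfold auxP
    compute_degree
    all_goals omega
  omega

private lemma auxP_eval (n K b : ℕ) (hb : b ≤ K) (hK : K ≤ n) (κ : ℝ) (c s z : ℂ)
    (hcz : (2:ℂ) * c * z = z ^ 2 + 1) (hsz : (2:ℂ) * Complex.I * s * z = z ^ 2 - 1) :
    Polynomial.eval z (auxP n κ K b)
    = (Complex.I * κ) ^ K * c ^ (K - b) * s ^ b /
        ((Nat.factorial (K - b) : ℂ) * (Nat.factorial b : ℂ)) * z ^ n := by
  unfold auxP
  simp only [Polynomial.eval_mul, Polynomial.eval_pow, Polynomial.eval_add, Polynomial.eval_sub,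
    Polynomial.eval_C, Polynomial.eval_X, Polynomial.eval_one]
  rw [← hcz, ← hsz]
  have hf1 : ((Nat.factorial (K - b) : ℂ)) ≠ 0 := Nat.cast_ne_zero.mpr (Nat.factorial_ne_zero _)
  have hf2 : ((Nat.factorial b : ℂ)) ≠ 0 := Nat.cast_ne_zero.mpr (Nat.factorial_ne_zero _)
  have h2 : (2:ℂ) ^ K = 2 ^ (K - b) * 2 ^ b := by rw [← pow_add]; congr 1; omega
  have hzz : z ^ (K - b) * z ^ b * z ^ (n - K) = z ^ n := by
    rw [← pow_add, ← pow_add]; congr 1; omega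
  rw [mul_pow, mul_pow, mul_pow, mul_pow]
  field_simp
  rw [h2]
  ring_nf
  rw [← hzz]
  ring

private lemma aux_sum (d : ℕ) (κ : ℝ) (hκ : κ ≠ 0) (ε c s zn : ℂ) :
    ∑ b : Fin (d+1), ((Nat.choose d (b:ℕ) : ℂ) * ε^(b:ℕ) * Complex.I^(b:ℕ) *
      (Nat.factorial (d-(b:ℕ)) : ℂ) * (Nat.factorial (b:ℕ) : ℂ) / (Complex.I*κ)^d) *
      ((Complex.I*κ)^d * c^(d-(b:ℕ)) * s^(b:ℕ) /
        ((Nat.factorial (d-(b:ℕ)) : ℂ) * (Nat.factorial (b:ℕ) : ℂ)) * zn)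
    = (c + ε*s*Complex.I)^d * zn := by
  have hstep : ∀ b : Fin (d+1), ((Nat.choose d (b:ℕ) : ℂ) * ε^(b:ℕ) * Complex.I^(b:ℕ) *
      (Nat.factorial (d-(b:ℕ)) : ℂ) * (Nat.factorial (b:ℕ) : ℂ) / (Complex.I*κ)^d) *
      ((Complex.I*κ)^d * c^(d-(b:ℕ)) * s^(b:ℕ) /
        ((Nat.factorial (d-(b:ℕ)) : ℂ) * (Nat.factorial (b:ℕ) : ℂ)) * zn)
      = ((ε*s*Complex.I)^(b:ℕ) * c^(d-(b:ℕ)) * (Nat.choose d (b:ℕ) : ℂ)) * zn := by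
    intro b
    have hIκ : (Complex.I * κ)^d ≠ 0 :=
      pow_ne_zero _ (mul_ne_zero Complex.I_ne_zero (Complex.ofReal_ne_zero.mpr hκ))
    have hf1 : ((Nat.factorial (d-(b:ℕ)) : ℂ)) ≠ 0 := Nat.cast_ne_zero.mpr (Nat.factorial_ne_zero _)
    have hf2 : ((Nat.factorial (b:ℕ) : ℂ)) ≠ 0 := Nat.cast_ne_zero.mpr (Nat.factorial_ne_zero _)
    field_simp
    ring
  rw [Finset.sum_congr rfl (fun b _ => hstep b), ← Finset.sum_mul]
  congr 1
  rw [add_comm c, add_pow (ε*s*Complex.I) c d, Fin.sum_univ_eq_sum_range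
    (fun i => (ε * s * Complex.I) ^ i * c ^ (d - i) * (d.choose i : ℂ))]

/-- The matrix `M^C` of normalized Taylor coefficients up to order `n` of `p` classical
plane waves with wavenumber `κ ≠ 0` and distinct directions `θ_l ∈ [0,2π)` (rows indexed
by multi-indices `(k₁,k₂)` with `k₁+k₂ ≤ n`, encoded as pairs `(K,k₂)` with `K = k₁+k₂`)
has rank `2n+1` if and only if `p ≥ 2n+1`. -/
theorem stmt15 (n p : ℕ) (hn : 1 ≤ n) (hp : 1 ≤ p) (κ : ℝ) (hκ : κ ≠ 0)
    (θ : Fin p → ℝ) (hθ : ∀ l, θ l ∈ Set.Ico (0 : ℝ) (2 * Real.pi))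
    (hθinj : Function.Injective θ)
    (MC : Matrix ((K : Fin (n + 1)) × Fin (K.val + 1)) (Fin p) ℂ)
    (hMC : ∀ (r : (K : Fin (n + 1)) × Fin (K.val + 1)) (l : Fin p),
      MC r l = (Complex.I * (κ : ℂ)) ^ (r.1 : ℕ) *
        (Real.cos (θ l) : ℂ) ^ ((r.1 : ℕ) - (r.2 : ℕ)) * (Real.sin (θ l) : ℂ) ^ (r.2 : ℕ) /
        ((Nat.factorial ((r.1 : ℕ) - (r.2 : ℕ)) : ℂ) * (Nat.factorial (r.2 : ℕ) : ℂ))) :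
    MC.rank = 2 * n + 1 ↔ 2 * n + 1 ≤ p := by
  constructor
  · intro h
    have h2 := MC.rank_le_card_width
    simp only [Fintype.card_fin] at h2
    omega
  · intro hp2
    classical
    set z : Fin p → ℂ := fun l => Complex.exp (θ l * Complex.I) with hzdef
    have hzne : ∀ l, z l ≠ 0 := fun l => Complex.exp_ne_zero _
    have hzinj : Function.Injective z := by
      intro a b h
      apply hθinj
      rw [hzdef] at h; simp only at h
      rw [Complex.exp_eq_exp_iff_exists_int] at h
      obtain ⟨k, hk⟩ := h
      have him := congrArg Complex.im hk
      simp at him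
      have hπ := Real.pi_pos
      obtain ⟨ha1, ha2⟩ := hθ a; obtain ⟨hb1, hb2⟩ := hθ b
      have hk1 : (k:ℝ) < 1 := by nlinarith
      have hk2 : (-1:ℝ) < (k:ℝ) := by nlinarith
      have hk1' : k < 1 := by exact_mod_cast hk1
      have hk2' : -1 < k := by exact_mod_cast hk2
      have hk0 : k = 0 := by omega
      simp [hk0] at him
      linarith
    have hcz : ∀ l, (2:ℂ) * Complex.cos (θ l) * z l = z l ^ 2 + 1 := by
      intro l
      rw [hzdef]; simp only [Complex.exp_mul_I]
      linear_combination Complex.sin_sq_add_cos_sq ((θ l : ℂ)) -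
        (Complex.sin ((θ l):ℂ))^2 * Complex.I_sq
    have hsz : ∀ l, (2:ℂ) * Complex.I * Complex.sin (θ l) * z l = z l ^ 2 - 1 := by
      intro l
      rw [hzdef]; simp only [Complex.exp_mul_I]
      linear_combination (Complex.sin ((θ l):ℂ))^2 * Complex.I_sq -
        Complex.sin_sq_add_cos_sq ((θ l : ℂ))
    set MC' : Matrix ((K : Fin (n + 1)) × Fin (K.val + 1)) (Fin p) ℂ :=
      Matrix.of (fun r l => MC r l * z l ^ n) with hMC'def
    have hMC' : ∀ r l, MC' r l = (Complex.I * (κ : ℂ)) ^ (r.1 : ℕ) *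
        Complex.cos (θ l) ^ ((r.1 : ℕ) - (r.2 : ℕ)) * Complex.sin (θ l) ^ (r.2 : ℕ) /
        ((Nat.factorial ((r.1 : ℕ) - (r.2 : ℕ)) : ℂ) * (Nat.factorial (r.2 : ℕ) : ℂ)) *
        z l ^ n := by
      intro r l
      rw [hMC'def]
      simp only [Matrix.of_apply]
      rw [hMC r l, Complex.ofReal_cos, Complex.ofReal_sin]
    have hrank1 : MC'.rank = MC.rank := by
      have he : MC' = MC * Matrix.diagonal (fun l => z l ^ n) := by
        ext r l
        simp [hMC'def, Matrix.mul_diagonal]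
      rw [he]
      apply Matrix.rank_mul_eq_left_of_isUnit_det
      rw [Matrix.det_diagonal, isUnit_iff_ne_zero]
      exact Finset.prod_ne_zero_iff.mpr (fun l _ => pow_ne_zero _ (hzne l))
    set W : Matrix (Fin (2*n+1)) (Fin p) ℂ := Matrix.of (fun m l => z l ^ (m:ℕ)) with hWdef
    -- MC' = B * W
    have hle1 : MC'.rank ≤ W.rank := by
      have hfac : MC' = (Matrix.of fun (r : (K : Fin (n + 1)) × Fin (K.val + 1))
          (m : Fin (2*n+1)) => (auxP n κ (r.1:ℕ) (r.2:ℕ)).coeff (m:ℕ)) * W := by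
        ext r l
        rw [Matrix.mul_apply]
        have hb : (r.2:ℕ) ≤ (r.1:ℕ) := Nat.lt_succ_iff.mp r.2.isLt
        have hK : (r.1:ℕ) ≤ n := Nat.lt_succ_iff.mp r.1.isLt
        have hsum : ∑ m : Fin (2*n+1),
            (Matrix.of fun (r : (K : Fin (n + 1)) × Fin (K.val + 1)) (m : Fin (2*n+1)) =>
              (auxP n κ (r.1:ℕ) (r.2:ℕ)).coeff (m:ℕ)) r m * W m l
            = Polynomial.eval (z l) (auxP n κ (r.1:ℕ) (r.2:ℕ)) := by
          rw [Polynomial.eval_eq_sum_range' (auxP_natDegree_lt n κ _ _ hb hK) (z l)]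
          rw [← Fin.sum_univ_eq_sum_range
            (fun i => (auxP n κ (r.1:ℕ) (r.2:ℕ)).coeff i * z l ^ i)]
          rfl
        rw [hsum, auxP_eval n (r.1:ℕ) (r.2:ℕ) hb hK κ _ _ _ (hcz l) (hsz l), hMC' r l]
      rw [hfac]
      exact Matrix.rank_mul_le_right _ _
    -- W = Cm * MC'
    have hle2 : W.rank ≤ MC'.rank := by
      set dd : Fin (2*n+1) → ℕ := fun m => if n ≤ (m:ℕ) then (m:ℕ) - n else n - (m:ℕ) with hdd
      set ee : Fin (2*n+1) → ℂ := fun m => if n ≤ (m:ℕ) then 1 else -1 with hee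
      have hddn : ∀ m : Fin (2*n+1), dd m ≤ n := by
        intro m
        have := m.isLt
        rw [hdd]; dsimp only; split <;> omega
      have hfac : W = (Matrix.of fun (m : Fin (2*n+1)) (r : (K : Fin (n + 1)) × Fin (K.val + 1)) =>
          if (r.1:ℕ) = dd m then
            (Nat.choose (dd m) (r.2:ℕ) : ℂ) * (ee m)^(r.2:ℕ) * Complex.I^(r.2:ℕ) *
              (Nat.factorial (dd m - (r.2:ℕ)) : ℂ) * (Nat.factorial (r.2:ℕ) : ℂ) /
              (Complex.I*κ)^(dd m)
          else 0) * MC' := by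
        ext m l
        rw [Matrix.mul_apply]
        rw [← Finset.univ_sigma_univ, Finset.sum_sigma]
        set K₀ : Fin (n+1) := ⟨dd m, Nat.lt_succ_of_le (hddn m)⟩ with hK₀
        rw [Finset.sum_eq_single K₀]
        rotate_left
        · intro K _ hne
          have hv : (K:ℕ) ≠ dd m := fun h => hne (Fin.ext h)
          simp [hv]
        · intro h
          exact absurd (Finset.mem_univ _) h
        -- inner sum at K₀
        have hval : ∀ b : Fin ((K₀:ℕ)+1),
            (Matrix.of fun (m : Fin (2*n+1)) (r : (K : Fin (n + 1)) × Fin (K.val + 1)) =>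
              if (r.1:ℕ) = dd m then
                (Nat.choose (dd m) (r.2:ℕ) : ℂ) * (ee m)^(r.2:ℕ) * Complex.I^(r.2:ℕ) *
                  (Nat.factorial (dd m - (r.2:ℕ)) : ℂ) * (Nat.factorial (r.2:ℕ) : ℂ) /
                  (Complex.I*κ)^(dd m)
              else 0) m ⟨K₀, b⟩ * MC' ⟨K₀, b⟩ l
            = ((Nat.choose (dd m) (b:ℕ) : ℂ) * (ee m)^(b:ℕ) * Complex.I^(b:ℕ) *
              (Nat.factorial (dd m - (b:ℕ)) : ℂ) * (Nat.factorial (b:ℕ) : ℂ) /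
              (Complex.I*κ)^(dd m)) *
              ((Complex.I*κ)^(dd m) * Complex.cos (θ l)^(dd m - (b:ℕ)) *
                Complex.sin (θ l)^(b:ℕ) /
                ((Nat.factorial (dd m - (b:ℕ)) : ℂ) * (Nat.factorial (b:ℕ) : ℂ)) * z l ^ n) := by
          intro b
          rw [hMC' ⟨K₀, b⟩ l]
          simp
          exact if_pos rfl
        rw [Finset.sum_congr rfl (fun b _ => hval b)]
        symm
        refine Eq.trans (aux_sum (dd m) κ hκ (ee m) (Complex.cos (θ l))
          (Complex.sin (θ l)) (z l ^ n)) ?_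
        -- now: (cos + ee*sin*I)^(dd m) * z^n = z^m
        have hzl : z l = Complex.cos (θ l) + Complex.sin (θ l) * Complex.I :=
          Complex.exp_mul_I (θ l)
        rw [hWdef]; simp only [Matrix.of_apply]
        by_cases hm : n ≤ (m:ℕ)
        · have hdm : dd m = (m:ℕ) - n := by rw [hdd]; simp [hm]
          have hem : ee m = 1 := by rw [hee]; simp [hm]
          rw [hdm, hem, one_mul, ← hzl, ← pow_add]
          congr 1
          omega
        · have hdm : dd m = n - (m:ℕ) := by rw [hdd]; simp [hm]
          have hem : ee m = -1 := by rw [hee]; simp [hm]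
          rw [hdm, hem]
          have hone : (Complex.cos (θ l) + (-1) * Complex.sin (θ l) * Complex.I) * z l = 1 := by
            rw [hzl]
            linear_combination Complex.sin_sq_add_cos_sq ((θ l : ℂ)) -
              (Complex.sin ((θ l):ℂ))^2 * Complex.I_sq
          have hsplit : z l ^ n = z l ^ (n - (m:ℕ)) * z l ^ (m:ℕ) := by
            rw [← pow_add]; congr 1; omega
          rw [hsplit, ← mul_assoc, ← mul_pow, hone, one_pow, one_mul]
      rw [hfac]
      exact Matrix.rank_mul_le_right _ _
    have hWrank : W.rank = 2*n+1 := by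
      refine le_antisymm ?_ ?_
      · have := W.rank_le_card_height
        simpa using this
      · have hV : (W.submatrix id (Fin.castLE hp2)).rank = 2*n+1 := by
          have hVd : W.submatrix id (Fin.castLE hp2) =
              (Matrix.vandermonde (fun j : Fin (2*n+1) => z (Fin.castLE hp2 j))).transpose := by
            ext i j; simp [hWdef, Matrix.vandermonde]
          have hdet : IsUnit (W.submatrix id (Fin.castLE hp2)).det := by
            rw [hVd, Matrix.det_transpose, isUnit_iff_ne_zero]
            rw [Matrix.det_vandermonde_ne_zero_iff]
            exact hzinj.comp (Fin.castLE_injective hp2)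
          have := Matrix.rank_of_isUnit _ ((Matrix.isUnit_iff_isUnit_det _).mpr hdet)
          simpa using this
        have hmul : W.submatrix id (Fin.castLE hp2) =
            W * Matrix.of (fun l j => if l = Fin.castLE hp2 j then (1:ℂ) else 0) := by
          ext i j
          simp [Matrix.mul_apply, Matrix.submatrix_apply]
        calc 2*n+1 = (W.submatrix id (Fin.castLE hp2)).rank := hV.symm
          _ ≤ W.rank := by rw [hmul]; exact Matrix.rank_mul_le_left _ _
    have hWM : MC'.rank = W.rank := le_antisymm hle1 hle2
    rw [← hrank1, hWM, hWrank]
end
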